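/- A supercommutative superalgebra R is Noetherian (its super-ideals satisfy the ascending chain condition) if and only if the even component R₀ is a Noetherian ring and the odd component R₁ is finitely generated as an R₀-module. -/

import Mathlib

/-!
Every super-ideal is in particular an `R₀`-submodule of `R`, and `R = R₀ · 1 + R₀ · R₁`; so if
`R₀` is Noetherian and `R₁` is finitely generated, `R` is a Noetherian `R₀`-module and its
super-ideals satisfy the ACC. Conversely, let `N` be an `R₀`-submodule of a homogeneous component
`Rᵢ`. Supercommutativity gives `n r = ± r n` for homogeneous `n`, `r`, so the left ideal `R N` is
a super-ideal, and its degree-`i` part is `R₀ N = N`. Hence `N ↦ R N` embeds the `R₀`-submodules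
of `Rᵢ` into the super-ideals, and the ACC makes `R₀` and `R₁` Noetherian `R₀`-modules.
-/

variable {k : Type} [Field k]

/-- A super-ideal of a superalgebra: a homogeneous two-sided ideal, viewed as a
`k`-submodule. -/
def IsSuperIdeal {R : Type} [Ring R] [Algebra k R] (𝒜 : ZMod 2 → Submodule k R)
    [GradedAlgebra 𝒜] (J : Submodule k R) : Prop :=
  (∀ r : R, ∀ x ∈ J, r * x ∈ J) ∧ (∀ r : R, ∀ x ∈ J, x * r ∈ J) ∧
  (∀ x ∈ J, ∀ i : ZMod 2, ((DirectSum.decompose 𝒜 x i : ↥(𝒜 i)) : R) ∈ J)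

open DirectSum SetLike

section

variable {R : Type} [Ring R] [Algebra k R] (𝒜 : ZMod 2 → Submodule k R) [GradedAlgebra 𝒜]

local notation "R₀" => GradeZero.subalgebra 𝒜

abbrev SuperIdeal : Type := {J : Submodule k R // IsSuperIdeal 𝒜 J}

theorem wellFoundedGT_superIdeal_iff :
    WellFoundedGT (SuperIdeal 𝒜) ↔ ∀ c : ℕ → Submodule k R, (∀ n, IsSuperIdeal 𝒜 (c n)) →
      Monotone c → ∃ n, ∀ m, n ≤ m → c m = c n := by
  rw [wellFoundedGT_iff_monotone_chain_condition]
  constructor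
  · intro h c hc hmono
    obtain ⟨n, hn⟩ := h ⟨fun n => ⟨c n, hc n⟩, hmono⟩
    exact ⟨n, fun m hm => congrArg Subtype.val (hn m hm).symm⟩
  · intro h c
    obtain ⟨n, hn⟩ := h (fun n => (c n).1) (fun n => (c n).2) c.monotone
    exact ⟨n, fun m hm => Subtype.ext (hn m hm).symm⟩

theorem decompose_zero_add_decompose_one (x : R) :
    (decompose 𝒜 x 0 : R) + decompose 𝒜 x 1 = x := by
  classical
  have h := congrArg (decompose 𝒜).symm (DirectSum.sum_univ_of (decompose 𝒜 x))
  simp only [decompose_symm_sum, decompose_symm_of, Equiv.symm_apply_apply] at h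
  rwa [show (Finset.univ : Finset (ZMod 2)) = {0, 1} from rfl, Finset.sum_pair zero_ne_one] at h

theorem coe_decompose_mul_of_right_mem_sub {j : ZMod 2} {y : R} (hy : y ∈ 𝒜 j) (x : R)
    (i : ZMod 2) : (decompose 𝒜 (x * y) i : R) = decompose 𝒜 x (i - j) * y := by
  rw [← coe_decompose_mul_add_of_right_mem 𝒜 hy, sub_add_cancel]

theorem coe_decompose_mem_of_mem_span {M : Type} [SetLike M R] [AddSubmonoidClass M R]
    {T : Set R} {P : M} (i : ZMod 2) (h : ∀ r : R, ∀ t ∈ T, (decompose 𝒜 (r * t) i : R) ∈ P)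
    {x : R} (hx : x ∈ Submodule.span R T) : (decompose 𝒜 x i : R) ∈ P := by
  obtain ⟨n, f, g, rfl⟩ := Submodule.mem_span_set'.mp hx
  rw [← GradedRing.proj_apply, map_sum]
  exact sum_mem fun l _ => h (f l) (g l) (g l).2

def componentOverEven (i : ZMod 2) : Submodule R₀ R where
  carrier := 𝒜 i
  add_mem' := add_mem
  zero_mem' := zero_mem _
  smul_mem' a x hx := by simpa [Subalgebra.smul_def] using mul_mem_graded a.2 hx

theorem coe_decompose_mem_of_mem_span_of_le {i : ZMod 2} {N : Submodule R₀ R}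
    (hN : N ≤ componentOverEven 𝒜 i) {x : R} (hx : x ∈ Submodule.span R (N : Set R)) :
    (decompose 𝒜 x i : R) ∈ N := by
  refine coe_decompose_mem_of_mem_span 𝒜 i (fun r t ht => ?_) hx
  rw [coe_decompose_mul_of_right_mem_sub 𝒜 (hN ht), sub_self]
  exact N.smul_mem (⟨_, coe_mem (decompose 𝒜 r 0)⟩ : R₀) ht

section Supercommutative

variable {𝒜}
variable (hsc : ∀ (i j : ZMod 2) (a b : R), a ∈ 𝒜 i → b ∈ 𝒜 j →
      b * a = ((-1 : ℤ) ^ (i.val * j.val)) • (a * b))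
include hsc

theorem exists_mul_eq_mul_of_mem {i : ZMod 2} {t : R} (ht : t ∈ 𝒜 i) (r : R) :
    ∃ r' : R, t * r = r' * t := by
  refine ⟨((-1 : ℤ) ^ ((0 : ZMod 2).val * i.val)) • (decompose 𝒜 r 0 : R)
    + ((-1 : ℤ) ^ ((1 : ZMod 2).val * i.val)) • (decompose 𝒜 r 1 : R), ?_⟩
  conv_lhs => rw [← decompose_zero_add_decompose_one 𝒜 r]
  rw [mul_add, add_mul, smul_mul_assoc, smul_mul_assoc, ← hsc 0 i _ t (coe_mem _) ht,
    ← hsc 1 i _ t (coe_mem _) ht]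

theorem isSuperIdeal_span {T : Set R} (hT : ∀ t ∈ T, ∃ i, t ∈ 𝒜 i) :
    IsSuperIdeal 𝒜 ((Submodule.span R T).restrictScalars k) := by
  refine ⟨fun r x hx => (Submodule.span R T).smul_mem r hx, fun r x hx => ?_, fun x hx i => ?_⟩
  · induction hx using Submodule.span_induction with
    | mem t ht =>
      obtain ⟨j, htj⟩ := hT t ht
      obtain ⟨r', hr'⟩ := exists_mul_eq_mul_of_mem hsc htj r
      rw [hr']
      exact (Submodule.span R T).smul_mem r' (Submodule.subset_span ht)
    | zero => simp
    | add x y _ _ hx hy => rw [add_mul]; exact add_mem hx hy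
    | smul a x _ hx => rw [smul_eq_mul, mul_assoc]; exact Submodule.smul_mem _ a hx
  · refine coe_decompose_mem_of_mem_span 𝒜 i (fun r t ht => ?_) hx
    obtain ⟨j, htj⟩ := hT t ht
    rw [coe_decompose_mul_of_right_mem_sub 𝒜 htj]
    exact Submodule.smul_mem _ _ (Submodule.subset_span ht)

def superIdealSpan (i : ZMod 2) : Submodule R₀ (componentOverEven 𝒜 i) ↪o SuperIdeal 𝒜 :=
  OrderEmbedding.ofMapLEIff
    (fun N => ⟨(Submodule.span R (N.map (componentOverEven 𝒜 i).subtype : Set R)).restrictScalars k,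
      isSuperIdeal_span hsc fun _ ⟨x, _, hx⟩ => ⟨i, hx ▸ x.2⟩⟩)
    (fun N N' => by
      refine ⟨fun h x hx => ?_, fun h => Submodule.span_mono (Submodule.map_mono h)⟩
      have hx' : (x : R) ∈ Submodule.span R (N'.map (componentOverEven 𝒜 i).subtype : Set R) :=
        h (Submodule.subset_span (Submodule.mem_map_of_mem hx))
      have hdeg := coe_decompose_mem_of_mem_span_of_le 𝒜 (Submodule.map_subtype_le _ _) hx'
      rw [decompose_of_mem_same 𝒜 x.2] at hdeg
      obtain ⟨y, hy, hyx⟩ := hdeg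
      exact Subtype.ext hyx ▸ hy)

theorem isNoetherian_componentOverEven [WellFoundedGT (SuperIdeal 𝒜)] (i : ZMod 2) :
    IsNoetherian R₀ (componentOverEven 𝒜 i) :=
  isNoetherian_iff'.mpr (superIdealSpan hsc i).strictMono.wellFoundedGT

end Supercommutative

def evenEquivComponentOverEvenZero : R₀ ≃ₗ[R₀] componentOverEven 𝒜 0 where
  toFun a := ⟨a, a.2⟩
  invFun x := ⟨x, x.2⟩
  map_add' _ _ := rfl
  map_smul' _ _ := rfl
  left_inv _ := rfl
  right_inv _ := rfl

theorem isNoetherianRing_of_isNoetherian_componentOverEven_zero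
    [IsNoetherian R₀ (componentOverEven 𝒜 0)] : IsNoetherianRing ↥(𝒜 0) :=
  (isNoetherian_of_linearEquiv (evenEquivComponentOverEvenZero 𝒜).symm : IsNoetherianRing R₀)

theorem span_mul_eq_restrictScalars_span (s : Finset R) :
    Submodule.span k {x | ∃ b ∈ 𝒜 0, ∃ y ∈ s, x = b * y}
      = (Submodule.span R₀ (s : Set R)).restrictScalars k := by
  refine le_antisymm (Submodule.span_le.mpr ?_) fun x hx => ?_
  · rintro _ ⟨b, hb, y, hy, rfl⟩
    exact Submodule.smul_mem _ (⟨b, hb⟩ : R₀) (Submodule.subset_span hy)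
  · obtain ⟨n, f, g, rfl⟩ := Submodule.mem_span_set'.mp hx
    exact sum_mem fun l _ => Submodule.subset_span ⟨f l, (f l).2, g l, (g l).2, rfl⟩

theorem componentOverEven_fg_iff (i : ZMod 2) :
    (componentOverEven 𝒜 i).FG ↔ ∃ s : Finset R, (↑s : Set R) ⊆ (𝒜 i : Set R) ∧
      ∀ r ∈ 𝒜 i, r ∈ Submodule.span k {x | ∃ b ∈ 𝒜 0, ∃ y ∈ s, x = b * y} := by
  simp only [span_mul_eq_restrictScalars_span, Submodule.restrictScalars_mem]
  constructor
  · rintro ⟨s, hs⟩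
    exact ⟨s, (Submodule.subset_span : (s : Set R) ⊆ _).trans hs.le, fun r hr => hs ▸ hr⟩
  · rintro ⟨s, hs, hspan⟩
    exact ⟨s, le_antisymm (Submodule.span_le.mpr hs) hspan⟩

theorem componentOverEven_zero_eq_span_one : componentOverEven 𝒜 0 = Submodule.span R₀ {1} := by
  ext x
  rw [Submodule.mem_span_singleton]
  refine ⟨fun hx => ⟨⟨x, hx⟩, mul_one x⟩, ?_⟩
  rintro ⟨a, rfl⟩
  exact (componentOverEven 𝒜 0).smul_mem a (one_mem_graded 𝒜)

theorem componentOverEven_zero_sup_one : componentOverEven 𝒜 0 ⊔ componentOverEven 𝒜 1 = ⊤ :=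
  eq_top_iff.mpr fun x _ => decompose_zero_add_decompose_one 𝒜 x ▸
    Submodule.add_mem_sup (coe_mem (decompose 𝒜 x 0)) (coe_mem (decompose 𝒜 x 1))

theorem module_finite_of_componentOverEven_one_fg (h : (componentOverEven 𝒜 1).FG) :
    Module.Finite R₀ R := by
  rw [Module.finite_def, ← componentOverEven_zero_sup_one]
  exact (componentOverEven_zero_eq_span_one 𝒜 ▸ Submodule.fg_span_singleton 1).sup h

def SuperIdeal.toSubmodule : SuperIdeal 𝒜 ↪o Submodule R₀ R :=
  OrderEmbedding.ofMapLEIff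
    (fun J => { J.1 with smul_mem' := fun a x hx => J.2.1 a x hx }) fun _ _ => Iff.rfl

theorem wellFoundedGT_superIdeal [IsNoetherianRing R₀] [Module.Finite R₀ R] :
    WellFoundedGT (SuperIdeal 𝒜) :=
  have := isNoetherian_of_isNoetherianRing_of_finite R₀ R
  (SuperIdeal.toSubmodule 𝒜).strictMono.wellFoundedGT

end

theorem noetherian_iff_even_noetherian_and_odd_fg
    (R : Type) [Ring R] [Algebra k R]
    (𝒜 : ZMod 2 → Submodule k R) [GradedAlgebra 𝒜]
    (hsc : ∀ (i j : ZMod 2) (a b : R), a ∈ 𝒜 i → b ∈ 𝒜 j →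
      b * a = ((-1 : ℤ) ^ (i.val * j.val)) • (a * b)) :
    -- super-ideals of `R` satisfy the ACC
    (∀ c : ℕ → Submodule k R, (∀ n, IsSuperIdeal 𝒜 (c n)) → Monotone c →
      ∃ n, ∀ m, n ≤ m → c m = c n)
      ↔
    -- iff `R₀` is Noetherian and `R₁` is a finitely generated `R₀`-module
    (IsNoetherianRing ↥(𝒜 0) ∧
      ∃ s : Finset R, (↑s : Set R) ⊆ (𝒜 1 : Set R) ∧
        ∀ r ∈ 𝒜 1, r ∈ Submodule.span k {x | ∃ b ∈ 𝒜 0, ∃ y ∈ s, x = b * y}) := by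
  rw [← wellFoundedGT_superIdeal_iff, ← componentOverEven_fg_iff]
  constructor
  · intro _
    have := isNoetherian_componentOverEven hsc
    exact ⟨isNoetherianRing_of_isNoetherian_componentOverEven_zero 𝒜,
      (Submodule.fg_top _).mp (IsNoetherian.noetherian ⊤)⟩
  · rintro ⟨hR₀, hfg⟩
    have : IsNoetherianRing (GradeZero.subalgebra 𝒜) := hR₀
    have := module_finite_of_componentOverEven_one_fg 𝒜 hfg
    exact wellFoundedGT_superIdeal 𝒜
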